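/- Let p_n be the monic polynomials defined by p_{n+1}(x) = (x − b_n)p_n(x) − λ_n p_{n−1}(x), p_0 = 1, p_{−1} = 0, with b_n = q^{n+1}[n+1]_q + q^{n−1}[n]_q and λ_n = q^{2n−1}([n]_q)^2, for fixed 0 < q < 1. Let L be the linear functional on polynomials given by L(f) = (1−q) f(0) + Σ_{i≥1} q^i (q;q)_∞/(q;q)_{i−1} · f(q^{i−1}/(1−q)). Then L(p_n) = 0 for all n ≥ 1, and consequently L(p_m p_n) = 0 for all m ≠ n. -/

import Mathlib

open Finset

namespace SS

variable {n : ℕ}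

/-- `descB σ j = true` iff there is a descent between positions `j` and `j+1`
in the word `σ(1)σ(2)⋯σ(n)`. -/
def descB (σ : Equiv.Perm (Fin n)) (j : ℕ) : Bool :=
  if h : j + 1 < n then decide ((σ ⟨j+1, h⟩) < σ ⟨j, Nat.lt_of_succ_lt h⟩) else false

/-- The index of the maximal increasing run containing position `p`. -/
def runIdx (σ : Equiv.Perm (Fin n)) (p : ℕ) : ℕ :=
  ((Finset.range p).filter (fun j => descB σ j = true)).card

/-- The index of the run containing the value `v`. -/
def runOf (σ : Equiv.Perm (Fin n)) (v : Fin n) : ℕ := runIdx σ (σ.symm v).val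

/-- The number of maximal increasing runs of `σ`. -/
def runCount (σ : Equiv.Perm (Fin n)) : ℕ :=
  if n = 0 then 0 else runIdx σ n + 1

/-- `lsgAt σ v` : number of runs strictly to the left of (the run of) `v`
containing both an element smaller than `v` and an element greater than `v`. -/
def lsgAt (σ : Equiv.Perm (Fin n)) (v : Fin n) : ℕ :=
  ((Finset.range (runCount σ)).filter (fun r => r < runOf σ v ∧
      (∃ a : Fin n, runOf σ a = r ∧ a < v) ∧ (∃ b : Fin n, runOf σ b = r ∧ v < b))).card

/-- `rsgAt σ v` : number of runs strictly to the right of `v`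
containing both an element smaller than `v` and an element greater than `v`. -/
def rsgAt (σ : Equiv.Perm (Fin n)) (v : Fin n) : ℕ :=
  ((Finset.range (runCount σ)).filter (fun r => runOf σ v < r ∧
      (∃ a : Fin n, runOf σ a = r ∧ a < v) ∧ (∃ b : Fin n, runOf σ b = r ∧ v < b))).card

def lsg (σ : Equiv.Perm (Fin n)) : ℕ := ∑ v : Fin n, lsgAt σ v
def rsg (σ : Equiv.Perm (Fin n)) : ℕ := ∑ v : Fin n, rsgAt σ v

/-- position `p` begins a maximal increasing run. -/
def startsB (σ : Equiv.Perm (Fin n)) (p : ℕ) : Bool := p == 0 || descB σ (p - 1)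

/-- position `p` ends a maximal increasing run. -/
def endsB (σ : Equiv.Perm (Fin n)) (p : ℕ) : Bool := p + 1 == n || descB σ p

def openerB (σ : Equiv.Perm (Fin n)) (v : Fin n) : Bool :=
  startsB σ (σ.symm v).val && !endsB σ (σ.symm v).val
def closerB (σ : Equiv.Perm (Fin n)) (v : Fin n) : Bool :=
  endsB σ (σ.symm v).val && !startsB σ (σ.symm v).val
def singB (σ : Equiv.Perm (Fin n)) (v : Fin n) : Bool :=
  startsB σ (σ.symm v).val && endsB σ (σ.symm v).val
def contB (σ : Equiv.Perm (Fin n)) (v : Fin n) : Bool :=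
  !startsB σ (σ.symm v).val && !endsB σ (σ.symm v).val

def lsgOp (σ : Equiv.Perm (Fin n)) : ℕ :=
  ∑ v ∈ univ.filter (fun v : Fin n => openerB σ v = true), lsgAt σ v
def rsgOp (σ : Equiv.Perm (Fin n)) : ℕ :=
  ∑ v ∈ univ.filter (fun v : Fin n => openerB σ v = true), rsgAt σ v
def lsgClos (σ : Equiv.Perm (Fin n)) : ℕ :=
  ∑ v ∈ univ.filter (fun v : Fin n => closerB σ v = true), lsgAt σ v
def rsgClos (σ : Equiv.Perm (Fin n)) : ℕ :=
  ∑ v ∈ univ.filter (fun v : Fin n => closerB σ v = true), rsgAt σ v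
def lsgSing (σ : Equiv.Perm (Fin n)) : ℕ :=
  ∑ v ∈ univ.filter (fun v : Fin n => singB σ v = true), lsgAt σ v
def rsgSing (σ : Equiv.Perm (Fin n)) : ℕ :=
  ∑ v ∈ univ.filter (fun v : Fin n => singB σ v = true), rsgAt σ v
def lsgCont (σ : Equiv.Perm (Fin n)) : ℕ :=
  ∑ v ∈ univ.filter (fun v : Fin n => contB σ v = true), lsgAt σ v
def rsgCont (σ : Equiv.Perm (Fin n)) : ℕ :=
  ∑ v ∈ univ.filter (fun v : Fin n => contB σ v = true), rsgAt σ v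

/-- `[m]_q = 1 + q + ⋯ + q^{m-1}`. -/
def qint {R : Type*} [CommRing R] (q : R) (m : ℕ) : R := ∑ i ∈ Finset.range m, q ^ i

/-- `[n]_q! = [1]_q [2]_q ⋯ [n]_q`. -/
def qfact {R : Type*} [CommRing R] (q : R) (n : ℕ) : R := ∏ m ∈ Finset.range n, qint q (m+1)

/-- `moment b lam l h` : sum of the weights of all weighted Motzkin paths with `l` steps
starting at height `h` and ending at height `0`, where up steps have weight `1`,
a level step at height `k` has weight `b k`, and a down step from height `k`
has weight `lam k`.  The `n`th moment of the corresponding monic orthogonal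
polynomial sequence is `moment b lam n 0`. -/
def moment {R : Type*} [CommRing R] (b lam : ℕ → R) : ℕ → ℕ → R
  | 0, h => if h = 0 then 1 else 0
  | (l+1), h => moment b lam l (h+1) + b h * moment b lam l h +
      (if h = 0 then 0 else lam h * moment b lam l (h-1))

end SS

namespace SS

/-- `(q;q)_k = ∏_{j=1}^{k} (1 - q^j)`. -/
noncomputable def poch (q : ℝ) (k : ℕ) : ℝ := ∏ j ∈ Finset.range k, (1 - q ^ (j + 1))

/-- `(q;q)_∞ = ∏_{j≥1} (1 - q^j)`. -/
noncomputable def pochInf (q : ℝ) : ℝ := ∏' j : ℕ, (1 - q ^ (j + 1))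

end SS
namespace SS

/-- Monic orthogonal polynomial sequence with recurrence
`p_{n+1} = (X - b_n) p_n - λ_n p_{n-1}`, `p_0 = 1`. -/
noncomputable def ops (b lam : ℕ → ℝ) : ℕ → Polynomial ℝ
  | 0 => 1
  | 1 => Polynomial.X - Polynomial.C (b 0)
  | (n+2) => (Polynomial.X - Polynomial.C (b (n+1))) * ops b lam (n+1)
      - Polynomial.C (lam (n+1)) * ops b lam n

/-- The linear functional `L f = (1-q) f(0) + ∑_{i≥1} q^i (q;q)_∞/(q;q)_{i-1} · f(q^{i-1}/(1-q))`. -/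
noncomputable def Lfun (q : ℝ) (f : Polynomial ℝ) : ℝ :=
  (1 - q) * f.eval 0 + ∑' i : ℕ, (q ^ (i + 1) * pochInf q / poch q i) * f.eval (q ^ i / (1 - q))

end SS


/-!
Write `W` for the linear functional `X ^ k ↦ [k]_q!` (`qfactFunctional`). Euler's identity
`∑ᵢ q^{i(m+1)} (q;q)_∞ / (q;q)_i = (q;q)_m` gives `L(x^m) = (1 - q) δ_{m,0} + q [m]_q!`, that is
`L f = (1 - q) f(0) + q W(f)`.

Along the three-term recurrence one finds `p_n(0) = ∏_{j<n} (-q^{j+1} [j+1]_q)` and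
`W(x^l p_n) = [l]_q! R_n([l]_q)`, where `R_n(u)` (`mixedMomentRatio`) is built from the
products `∏_{j<k} q^{j+1} (u - [j+1]_q)` (`qFalling`). Since `[l+1]_q = 1 + q [l]_q`, the
induction step is a polynomial identity in `u`. The products vanish at `u = [l]_q` for
`1 ≤ l ≤ k`, and for `l = 0` the two contributions to `L(p_n)` cancel; hence `L(x^l p_n) = 0`
for all `l < n`, which is orthogonality.
-/

namespace SS

open Finset Filter Topology Polynomial

section Pochhammer

variable {q : ℝ}

lemma poch_succ (q : ℝ) (k : ℕ) : poch q (k + 1) = poch q k * (1 - q ^ (k + 1)) :=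
  prod_range_succ _ _

lemma one_sub_pow_succ_ne_zero (hq : |q| < 1) (j : ℕ) : 1 - q ^ (j + 1) ≠ 0 := by
  have : |q ^ (j + 1)| < 1 := by
    rw [abs_pow]
    exact pow_lt_one₀ (abs_nonneg q) hq j.succ_ne_zero
  intro h
  rw [← sub_eq_zero.mp h, abs_one] at this
  exact this.false

lemma poch_ne_zero (hq : |q| < 1) (k : ℕ) : poch q k ≠ 0 :=
  prod_ne_zero_iff.mpr fun j _ => one_sub_pow_succ_ne_zero hq j

lemma summable_norm_pow_succ (hq : |q| < 1) : Summable fun j : ℕ => ‖-q ^ (j + 1)‖ := by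
  simpa [abs_pow] using
    (summable_nat_add_iff 1).mpr (summable_geometric_of_lt_one (abs_nonneg q) hq)

lemma hasProd_pochInf (hq : |q| < 1) : HasProd (fun j : ℕ => 1 - q ^ (j + 1)) (pochInf q) := by
  simpa [pochInf, ← sub_eq_add_neg] using
    (multipliable_one_add_of_summable (summable_norm_pow_succ hq)).hasProd

lemma pochInf_ne_zero (hq : |q| < 1) : pochInf q ≠ 0 := by
  simpa [pochInf, ← sub_eq_add_neg] using
    tprod_one_add_ne_zero_of_summable
      (fun j => by simpa [← sub_eq_add_neg] using one_sub_pow_succ_ne_zero hq j)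
      (summable_norm_pow_succ hq)

lemma pochInf_div_poch_eq (hq : |q| < 1) (i : ℕ) :
    pochInf q / poch q i = (1 - q ^ (i + 1)) * (pochInf q / poch q (i + 1)) := by
  rw [poch_succ]
  field_simp [poch_ne_zero hq i, one_sub_pow_succ_ne_zero hq i]

lemma tendsto_pochInf_div_poch (hq : |q| < 1) :
    Tendsto (fun i => pochInf q / poch q i) atTop (𝓝 1) := by
  have hpoch : Tendsto (poch q) atTop (𝓝 (pochInf q)) := (hasProd_pochInf hq).tendsto_prod_nat
  rw [← div_self (pochInf_ne_zero hq)]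
  exact tendsto_const_nhds.div hpoch (pochInf_ne_zero hq)

lemma summable_pow_mul_pochInf_div_poch (hq : |q| < 1) {r : ℝ} (hr : |r| < 1) :
    Summable fun i : ℕ => r ^ i * (pochInf q / poch q i) := by
  refine summable_of_isBigO_nat (summable_geometric_of_abs_lt_one hr) ?_
  simpa using (Asymptotics.isBigO_refl (fun i : ℕ => r ^ i) atTop).mul
    ((tendsto_pochInf_div_poch hq).isBigO_one ℝ)

/-- For `m = 0` the partial sums are `(1 - q ^ N) (q;q)_∞ / (q;q)_N`; passing from `m` to `m + 1`
multiplies the sum by `1 - q ^ (m + 1)`, because `q ^ (m + 1)` times the `i`-th term is the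
difference of the `(i + 1)`-st terms for `m` and for `m + 1`. -/
lemma hasSum_pow_mul_pochInf_div_poch (hq : |q| < 1) (m : ℕ) :
    HasSum (fun i : ℕ => (q ^ (m + 1)) ^ i * (pochInf q / poch q i)) (poch q m) := by
  induction m with
  | zero =>
    have hpartial : ∀ N : ℕ, ∑ i ∈ range N, (q ^ (0 + 1)) ^ i * (pochInf q / poch q i)
        = (1 - q ^ N) * (pochInf q / poch q N) := by
      intro N
      induction N with
      | zero => simp
      | succ N ih =>
        rw [sum_range_succ, ih, pochInf_div_poch_eq hq N]
        ring
    have hq' : |q ^ (0 + 1)| < 1 := by simpa using hq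
    rw [(summable_pow_mul_pochInf_div_poch hq hq').hasSum_iff_tendsto_nat, funext hpartial]
    simpa [poch] using ((tendsto_pow_atTop_nhds_zero_of_abs_lt_one hq).const_sub 1).mul
      (tendsto_pochInf_div_poch hq)
  | succ m ih =>
    have hshift := ((hasSum_nat_add_iff' 1).mpr ih).sub (ih.mul_left (q ^ (m + 1)))
    rw [← hasSum_nat_add_iff' 1]
    convert hshift using 1
    · funext i
      rw [pochInf_div_poch_eq hq i]
      ring
    · rw [sum_range_one, sum_range_one, poch_succ]
      ring

end Pochhammer

section QNumbers

variable (q : ℝ)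

lemma qint_zero : qint q 0 = 0 := rfl

lemma qint_one : qint q 1 = 1 := by simp [qint]

lemma qint_succ (n : ℕ) : qint q (n + 1) = 1 + q * qint q n := by
  rw [qint, geom_sum_succ, qint, add_comm]

lemma qfact_zero : qfact q 0 = 1 := rfl

lemma qfact_succ (n : ℕ) : qfact q (n + 1) = qfact q n * qint q (n + 1) := prod_range_succ _ _

lemma poch_eq_pow_mul_qfact (m : ℕ) : poch q m = (1 - q) ^ m * qfact q m := by
  simp_rw [poch, qfact, qint, ← mul_neg_geom_sum, prod_mul_distrib, prod_const, card_range]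

end QNumbers

noncomputable def qfactFunctional (q : ℝ) : ℝ[X] →ₗ[ℝ] ℝ :=
  lsum fun k => qfact q k • LinearMap.id

lemma qfactFunctional_monomial (q : ℝ) (k : ℕ) (a : ℝ) :
    qfactFunctional q (monomial k a) = a * qfact q k := by
  simp [qfactFunctional, mul_comm]

lemma qfactFunctional_X_pow (q : ℝ) (k : ℕ) : qfactFunctional q (X ^ k) = qfact q k := by
  rw [X_pow_eq_monomial, qfactFunctional_monomial, one_mul]

noncomputable def LfunLinearMap (q : ℝ) : ℝ[X] →ₗ[ℝ] ℝ :=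
  (1 - q) • leval 0 + q • qfactFunctional q

lemma LfunLinearMap_apply (q : ℝ) (f : ℝ[X]) :
    LfunLinearMap q f = (1 - q) * f.eval 0 + q * qfactFunctional q f := rfl

lemma hasSum_Lfun_series {q : ℝ} (hq : |q| < 1) (f : ℝ[X]) :
    HasSum (fun i : ℕ => q ^ (i + 1) * pochInf q / poch q i * f.eval (q ^ i / (1 - q)))
      (q * qfactFunctional q f) := by
  induction f using Polynomial.induction_on' with
  | add f g hf hg => simpa [mul_add] using hf.add hg
  | monomial m a =>
    have hq1 : 1 - q ≠ 0 := by simpa using one_sub_pow_succ_ne_zero hq 0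
    have hvalue : q * qfactFunctional q (monomial m a) = a * q / (1 - q) ^ m * poch q m := by
      rw [qfactFunctional_monomial, poch_eq_pow_mul_qfact]
      field_simp
    rw [hvalue]
    refine ((hasSum_pow_mul_pochInf_div_poch hq m).mul_left _).congr_fun fun i => ?_
    rw [eval_monomial, div_pow, ← pow_mul]
    ring

lemma Lfun_eq_LfunLinearMap {q : ℝ} (hq : |q| < 1) (f : ℝ[X]) : Lfun q f = LfunLinearMap q f := by
  rw [Lfun, (hasSum_Lfun_series hq f).tsum_eq, LfunLinearMap_apply]

section ThreeTermRecurrence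

variable (b lam : ℕ → ℝ)

lemma ops_zero : ops b lam 0 = 1 := rfl

lemma ops_one : ops b lam 1 = X - C (b 0) := rfl

lemma ops_add_two (n : ℕ) :
    ops b lam (n + 2) = (X - C (b (n + 1))) * ops b lam (n + 1) - C (lam (n + 1)) * ops b lam n :=
  rfl

lemma natDegree_ops_le (n : ℕ) : (ops b lam n).natDegree ≤ n := by
  induction n using Nat.twoStepInduction with
  | zero => rw [ops_zero, natDegree_one]
  | one => rw [ops_one, natDegree_X_sub_C]
  | more n ih1 ih2 =>
    rw [ops_add_two]
    refine (natDegree_sub_le _ _).trans (max_le ?_ ?_)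
    · exact natDegree_mul_le.trans (by rw [natDegree_X_sub_C]; omega)
    · exact (natDegree_C_mul_le _ _).trans (by omega)

lemma map_X_pow_mul_ops_add_two {M : Type*} [AddCommGroup M] [Module ℝ M] (φ : ℝ[X] →ₗ[ℝ] M)
    (l n : ℕ) :
    φ (X ^ l * ops b lam (n + 2)) = φ (X ^ (l + 1) * ops b lam (n + 1))
      - b (n + 1) • φ (X ^ l * ops b lam (n + 1)) - lam (n + 1) • φ (X ^ l * ops b lam n) := by
  rw [← map_smul, ← map_smul, ← map_sub, ← map_sub, ops_add_two, ← C_mul', ← C_mul']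
  congr 1
  ring

end ThreeTermRecurrence

lemma _root_.LinearMap.map_mul_eq_zero_of_natDegree_lt {R M : Type*} [CommSemiring R]
    [AddCommMonoid M] [Module R M] (φ : R[X] →ₗ[R] M) {p r : R[X]} {n : ℕ}
    (h : ∀ l < n, φ (X ^ l * p) = 0) (hr : r.natDegree < n) : φ (r * p) = 0 := by
  rw [r.as_sum_range_C_mul_X_pow' hr, sum_mul, map_sum]
  refine sum_eq_zero fun l hl => ?_
  rw [mul_assoc, C_mul', map_smul, h l (mem_range.mp hl), smul_zero]

section QRecurrence

variable (q : ℝ)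

noncomputable def bCoeff (m : ℕ) : ℝ :=
  q ^ ((m : ℤ) + 1) * qint q (m + 1) + q ^ ((m : ℤ) - 1) * qint q m

noncomputable def lamCoeff (m : ℕ) : ℝ := q ^ (2 * (m : ℤ) - 1) * (qint q m) ^ 2

lemma bCoeff_zero : bCoeff q 0 = q := by simp [bCoeff, qint_one, qint_zero]

lemma bCoeff_succ (k : ℕ) :
    bCoeff q (k + 1) = q ^ (k + 2) * qint q (k + 2) + q ^ k * qint q (k + 1) := by
  have e1 : ((k + 1 : ℕ) : ℤ) + 1 = ((k + 2 : ℕ) : ℤ) := by push_cast; ring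
  have e2 : ((k + 1 : ℕ) : ℤ) - 1 = (k : ℤ) := by push_cast; ring
  rw [bCoeff, e1, e2, zpow_natCast, zpow_natCast]

lemma lamCoeff_succ (k : ℕ) : lamCoeff q (k + 1) = q ^ (2 * k + 1) * qint q (k + 1) ^ 2 := by
  have e : 2 * ((k + 1 : ℕ) : ℤ) - 1 = ((2 * k + 1 : ℕ) : ℤ) := by push_cast; ring
  rw [lamCoeff, e, zpow_natCast]

noncomputable def qFalling (u : ℝ) (k : ℕ) : ℝ :=
  ∏ j ∈ range k, q ^ (j + 1) * (u - qint q (j + 1))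

lemma qFalling_zero (u : ℝ) : qFalling q u 0 = 1 := rfl

lemma qFalling_succ (u : ℝ) (k : ℕ) :
    qFalling q u (k + 1) = qFalling q u k * (q ^ (k + 1) * (u - qint q (k + 1))) :=
  prod_range_succ _ _

lemma qFalling_one_add_mul (u : ℝ) (k : ℕ) :
    qFalling q (1 + q * u) (k + 1) = q ^ (2 * k + 2) * u * qFalling q u k := by
  induction k with
  | zero =>
    rw [qFalling_succ, qFalling_zero, qFalling_zero, zero_add, qint_one]
    ring
  | succ k ih =>
    rw [qFalling_succ, ih, qFalling_succ, qint_succ q (k + 1)]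
    ring

lemma qFalling_qint_eq_zero {l k : ℕ} (hl : 1 ≤ l) (hlk : l ≤ k) :
    qFalling q (qint q l) k = 0 :=
  prod_eq_zero (mem_range.mpr (by omega : l - 1 < k))
    (by rw [Nat.sub_add_cancel hl, sub_self, mul_zero])

noncomputable def mixedMomentRatio (u : ℝ) : ℕ → ℝ
  | 0 => 1
  | n + 1 => qFalling q u (n + 1) + q ^ n * qint q (n + 1) * qFalling q u n

lemma mixedMomentRatio_add_two (u : ℝ) (n : ℕ) :
    mixedMomentRatio q u (n + 2)
      = (1 + q * u) * mixedMomentRatio q (1 + q * u) (n + 1)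
        - bCoeff q (n + 1) * mixedMomentRatio q u (n + 1)
        - lamCoeff q (n + 1) * mixedMomentRatio q u n := by
  cases n with
  | zero =>
    simp only [mixedMomentRatio]
    rw [qFalling_one_add_mul, qFalling_succ q u 1, qFalling_succ q u 0, qFalling_zero,
      qFalling_zero, bCoeff_succ, lamCoeff_succ, qint_succ q 1, zero_add, qint_one]
    ring
  | succ k =>
    simp only [mixedMomentRatio]
    rw [qFalling_one_add_mul, qFalling_one_add_mul, qFalling_succ q u (k + 2),
      qFalling_succ q u (k + 1), qFalling_succ q u k, bCoeff_succ, lamCoeff_succ,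
      qint_succ q (k + 2), qint_succ q (k + 1)]
    ring

lemma ops_eval_zero (n : ℕ) : (ops (bCoeff q) (lamCoeff q) n).eval 0 = qFalling q 0 n := by
  induction n using Nat.twoStepInduction with
  | zero => rw [ops_zero, eval_one, qFalling_zero]
  | one =>
    rw [ops_one, eval_sub, eval_X, eval_C, bCoeff_zero, qFalling_succ, qFalling_zero, zero_add,
      qint_one]
    ring
  | more n ih1 ih2 =>
    rw [ops_add_two, eval_sub, eval_mul, eval_mul, eval_sub, eval_X, eval_C, eval_C, ih1, ih2,
      qFalling_succ q 0 (n + 1), qFalling_succ q 0 n, bCoeff_succ, lamCoeff_succ,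
      qint_succ q (n + 1)]
    ring

lemma qfactFunctional_X_pow_mul_ops (l n : ℕ) :
    qfactFunctional q (X ^ l * ops (bCoeff q) (lamCoeff q) n)
      = qfact q l * mixedMomentRatio q (qint q l) n := by
  induction n using Nat.twoStepInduction generalizing l with
  | zero =>
    rw [ops_zero, mul_one, qfactFunctional_X_pow, mixedMomentRatio, mul_one]
  | one =>
    have h : X ^ l * ops (bCoeff q) (lamCoeff q) 1 = X ^ (l + 1) - q • X ^ l := by
      rw [ops_one, bCoeff_zero, ← C_mul', pow_succ]
      ring
    rw [h, map_sub, map_smul, qfactFunctional_X_pow, qfactFunctional_X_pow, qfact_succ,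
      qint_succ, smul_eq_mul, mixedMomentRatio, qFalling_succ, qFalling_zero, zero_add, qint_one]
    ring
  | more n ih1 ih2 =>
    rw [map_X_pow_mul_ops_add_two, ih2, ih2, ih1, mixedMomentRatio_add_two, qfact_succ,
      qint_succ q l, smul_eq_mul, smul_eq_mul]
    ring

lemma LfunLinearMap_X_pow_mul_ops {l n : ℕ} (hln : l < n) :
    LfunLinearMap q (X ^ l * ops (bCoeff q) (lamCoeff q) n) = 0 := by
  obtain ⟨k, rfl⟩ : ∃ k, n = k + 1 := ⟨n - 1, by omega⟩
  rw [LfunLinearMap_apply, qfactFunctional_X_pow_mul_ops, mixedMomentRatio]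
  rcases Nat.eq_zero_or_pos l with rfl | hl
  · rw [pow_zero, one_mul, ops_eval_zero, qFalling_succ, qfact_zero, qint_zero, qFalling_succ]
    ring
  · rw [qFalling_qint_eq_zero q hl hln.le, qFalling_qint_eq_zero q hl (by omega)]
    simp [hl.ne']

end QRecurrence

end SS

open SS in
/-- The functional `L` annihilates `p_n` for `n ≥ 1`, and `L(p_m p_n) = 0` for `m ≠ n`,
for the polynomials with `b_n = q^{n+1}[n+1]_q + q^{n-1}[n]_q`, `λ_n = q^{2n-1}[n]_q^2`. -/
theorem stmt12 (q : ℝ) (h0 : 0 < q) (h1 : q < 1) :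
    (∀ n : ℕ, 1 ≤ n →
      Lfun q (ops (fun m => q ^ ((m : ℤ) + 1) * qint q (m + 1) + q ^ ((m : ℤ) - 1) * qint q m)
                  (fun m => q ^ (2 * (m : ℤ) - 1) * (qint q m) ^ 2) n) = 0) ∧
    (∀ m n : ℕ, m ≠ n →
      Lfun q (ops (fun m => q ^ ((m : ℤ) + 1) * qint q (m + 1) + q ^ ((m : ℤ) - 1) * qint q m)
                  (fun m => q ^ (2 * (m : ℤ) - 1) * (qint q m) ^ 2) m *
              ops (fun m => q ^ ((m : ℤ) + 1) * qint q (m + 1) + q ^ ((m : ℤ) - 1) * qint q m)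
                  (fun m => q ^ (2 * (m : ℤ) - 1) * (qint q m) ^ 2) n) = 0) := by
  change (∀ n : ℕ, 1 ≤ n → Lfun q (ops (bCoeff q) (lamCoeff q) n) = 0) ∧
    ∀ m n : ℕ, m ≠ n → Lfun q (ops (bCoeff q) (lamCoeff q) m * ops (bCoeff q) (lamCoeff q) n) = 0
  have hq : |q| < 1 := abs_lt.mpr ⟨by linarith, h1⟩
  have horth : ∀ m n : ℕ, m < n →
      Lfun q (ops (bCoeff q) (lamCoeff q) m * ops (bCoeff q) (lamCoeff q) n) = 0 := by
    intro m n hmn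
    rw [Lfun_eq_LfunLinearMap hq]
    exact (LfunLinearMap q).map_mul_eq_zero_of_natDegree_lt
      (fun l hl => LfunLinearMap_X_pow_mul_ops q hl) ((natDegree_ops_le _ _ m).trans_lt hmn)
  refine ⟨fun n hn => by simpa only [ops_zero, one_mul] using horth 0 n hn, fun m n hmn => ?_⟩
  rcases hmn.lt_or_gt with hlt | hgt
  · exact horth m n hlt
  · rw [mul_comm]
    exact horth n m hgt
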